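/- arXiv:math/9207217 — 4 statements merged into one kernel-verified Lean document; each statement's English description precedes it below -/
import Mathlib

section
/- Let G be a finite group and let H, K be subgroups of G. Then H and K are pointwise conjugate in G if and only if for every g ∈ G, the cardinality of H ∩ (g) equals the cardinality of K ∩ (g), where (g) denotes the conjugacy class of g in G. -/
/-! Both conditions say that `h ↦ (h)` maps `H` and `K` onto the same multiset of conjugacy
classes: a bijection between finite sets commuting with maps to a common target exists iff all
fibres have the same size, and the fibre of `h ↦ (h)` over `(g)` is `H ∩ (g)`. -/

/-- Two subgroups `H, K ≤ G` are *pointwise conjugate in `G`* if there is a bijection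
`α : H → K` such that every `h ∈ H` is sent to a conjugate `α h = gₕ⁻¹ * h * gₕ` of itself,
for some `gₕ ∈ G` depending on `h`. -/
def PointwiseConj {G : Type*} [Group G] (H K : Subgroup G) : Prop :=
  ∃ α : H ≃ K, ∀ h : H, ∃ g : G, (α h : G) = g⁻¹ * h * g

theorem Equiv.exists_comp_eq_iff_card_fiber_eq {α β γ : Type*} [Finite α] [Finite β]
    (f : α → γ) (g : β → γ) :
    (∃ e : α ≃ β, ∀ a, g (e a) = f a) ↔
      ∀ c, Nat.card {a // f a = c} = Nat.card {b // g b = c} := by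
  constructor
  · rintro ⟨e, he⟩ c
    exact Nat.card_congr (e.subtypeEquiv fun a ↦ by rw [he])
  · intro h
    exact ⟨Equiv.ofFiberEquiv fun c ↦ Classical.choice (Finite.card_eq.mp (h c)),
      Equiv.ofFiberEquiv_map _⟩

section Conj

variable {G : Type*} [Group G]

theorem pointwiseConj_iff_exists_equiv_conjClasses_mk (H K : Subgroup G) :
    PointwiseConj H K ↔
      ∃ α : H ≃ K, ∀ h : H, ConjClasses.mk (α h : G) = ConjClasses.mk (h : G) := by
  refine exists_congr fun α ↦ forall_congr' fun h ↦ ?_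
  rw [ConjClasses.mk_eq_mk_iff_isConj, isConj_comm, isConj_iff]
  constructor
  · rintro ⟨g, hg⟩
    exact ⟨g⁻¹, by rw [hg, inv_inv]⟩
  · rintro ⟨c, hc⟩
    exact ⟨c⁻¹, by rw [← hc, inv_inv]⟩

theorem Subgroup.card_inter_conjClass_eq_card_fiber (H : Subgroup G) (g : G) :
    Nat.card {x : G // x ∈ H ∧ IsConj g x} =
      Nat.card {h : H // ConjClasses.mk (h : G) = ConjClasses.mk g} :=
  Nat.card_congr <| (Equiv.subtypeSubtypeEquivSubtypeInter (· ∈ H) (IsConj g)).symm.trans <|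
    Equiv.subtypeEquivRight fun h ↦ by rw [ConjClasses.mk_eq_mk_iff_isConj, isConj_comm]

end Conj

/-- Two subgroups `H, K` of a finite group `G` are pointwise conjugate iff every conjugacy
class `(g)` of `G` meets `H` and `K` in the same number of elements. -/
theorem pointwiseConj_iff_card_inter_conjClass_eq
    (G : Type*) [Group G] [Fintype G] (H K : Subgroup G) :
    PointwiseConj H K ↔
      ∀ g : G, Nat.card {x : G // x ∈ H ∧ IsConj g x} = Nat.card {x : G // x ∈ K ∧ IsConj g x} := by
  rw [pointwiseConj_iff_exists_equiv_conjClasses_mk,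
    Equiv.exists_comp_eq_iff_card_fiber_eq (fun h : H ↦ ConjClasses.mk (h : G))
      (fun k : K ↦ ConjClasses.mk (k : G)), ConjClasses.mk_surjective.forall]
  simp only [Subgroup.card_inter_conjClass_eq_card_fiber]
end

section
/- Let p be a prime, P a finite p-group, and C₁, C₂ finite cyclic groups of order prime to p. Let φᵢ : Cᵢ → Aut(P) (i = 1, 2) be group homomorphisms such that the composite of φᵢ with the projection Aut(P) → Out(P) = Aut(P)/Inn(P) is injective. If the images of C₁ and C₂ in Out(P) are conjugate subgroups of Out(P), then the semidirect products P ⋊_{φ₁} C₁ and P ⋊_{φ₂} C₂ are isomorphic as groups. -/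
/-!
Lift the conjugating element of `Out P` to `β : MulAut P`. Then `β⁻¹ φ₁(C₁) β` and `φ₂(C₂)` have
the same image in `Out P`, so they generate the same subgroup together with `Inn P`, a normal
`p`-subgroup of `Aut P` of order prime to theirs. By the conjugacy part of the Schur–Zassenhaus
theorem they are conjugate in `Aut P`, and a semidirect product by a faithful action only depends,
up to isomorphism, on the conjugacy class of the image of the action.

Conjugacy of complements of a normal `p`-subgroup `N` goes by induction on `|N|`: the centre `Z`
of `N` is normal in `G`, the induction hypothesis in `G ⧸ Z` makes the complements conjugate
modulo `Z`, and the abelian case (`Subgroup.QuotientDiff`) finishes inside the subgroup they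
generate with `Z`.
-/

/-- The subgroup of inner automorphisms of `P`. -/
def Inn (P : Type) [Group P] : Subgroup (MulAut P) := (MulAut.conj (G := P)).range

instance Inn.normal (P : Type) [Group P] : (Inn P).Normal := by
  constructor
  rintro - ⟨q, rfl⟩ g
  refine ⟨g q, ?_⟩
  ext x
  simp [MulAut.conj_apply, map_mul, map_inv]

/-- The outer automorphism group `Out P = Aut(P)/Inn(P)`. -/
def Out (P : Type) [Group P] : Type := MulAut P ⧸ Inn P

instance (P : Type) [Group P] : Group (Out P) := QuotientGroup.Quotient.group _

/-- The canonical projection `Aut(P) → Out(P)`. -/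
def toOut (P : Type) [Group P] : MulAut P →* Out P := QuotientGroup.mk' (Inn P)

namespace Subgroup

variable {G : Type*} [Group G]

theorem map_conj_map_conj (H : Subgroup G) (a b : G) :
    (H.map (MulAut.conj b).toMonoidHom).map (MulAut.conj a).toMonoidHom =
      H.map (MulAut.conj (a * b)).toMonoidHom := by
  rw [map_map]
  congr 1
  ext
  simp [mul_assoc]

theorem map_map_conj {G' : Type*} [Group G'] (f : G →* G') (H : Subgroup G) (g : G) :
    (H.map (MulAut.conj g).toMonoidHom).map f =
      (H.map f).map (MulAut.conj (f g)).toMonoidHom := by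
  simp only [map_map]
  congr 1
  ext
  simp

theorem map_conj_eq_of_map_conj_subgroupOf_eq {M H K : Subgroup G} (hH : H ≤ M) (hK : K ≤ M)
    {m : M} (h : (H.subgroupOf M).map (MulAut.conj m).toMonoidHom = K.subgroupOf M) :
    H.map (MulAut.conj (m : G)).toMonoidHom = K := by
  have := congrArg (map M.subtype) h
  rwa [map_map_conj, subgroupOf_map_subtype, subgroupOf_map_subtype, inf_eq_left.mpr hH,
    inf_eq_left.mpr hK] at this

theorem ker_sup_eq_of_map_eq {G' : Type*} [Group G'] {f : G →* G'} {H K : Subgroup G}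
    (h : H.map f = K.map f) : f.ker ⊔ H = f.ker ⊔ K := by
  rw [sup_comm, map_eq_map_iff.mp h, sup_comm]

theorem card_subgroupOf_of_le {H K : Subgroup G} (h : H ≤ K) :
    Nat.card (H.subgroupOf K) = Nat.card H :=
  Nat.card_congr (subgroupOfEquivOfLe h).toEquiv

theorem IsComplement'.eq_of_le {Z K S : Subgroup G} (hK : IsComplement' Z K)
    (hS : Disjoint Z S) (hle : K ≤ S) : K = S := by
  refine le_antisymm hle fun s hs => ?_
  obtain ⟨⟨z, k⟩, rfl⟩ := hK.2 s
  have hz : (z : G) ∈ S := by simpa using S.mul_mem hs (S.inv_mem (hle k.2))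
  simp [disjoint_def.mp hS z.2 hz]

theorem isComplement'_subgroupOf_sup {N H : Subgroup G} [N.Normal] (h : Disjoint N H) :
    IsComplement' (N.subgroupOf (N ⊔ H)) (H.subgroupOf (N ⊔ H)) := by
  refine isComplement'_of_disjoint_and_mul_eq_univ ?_ ?_
  · exact disjoint_def.mpr fun hxN hxH => Subtype.ext (disjoint_def.mp h hxN hxH)
  · refine Set.eq_univ_iff_forall.mpr fun ⟨x, hx⟩ => ?_
    rw [← SetLike.mem_coe, normal_mul, Set.mem_mul] at hx
    obtain ⟨y, hy, z, hz, rfl⟩ := hx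
    exact ⟨⟨y, le_sup_left (a := N) hy⟩, hy, ⟨z, le_sup_right (a := N) hz⟩, hz, rfl⟩

section QuotientDiff

open MulAction

variable {Z : Subgroup G} [Z.Normal] [IsMulCommutative Z] [Z.FiniteIndex]

noncomputable def IsComplement'.quotientDiff {K : Subgroup G} (hK : IsComplement' Z K) :
    Z.QuotientDiff :=
  Quotient.mk'' ⟨K, hK.symm⟩

theorem IsComplement'.stabilizer_quotientDiff (hco : (Nat.card Z).Coprime Z.index)
    {K : Subgroup G} (hK : IsComplement' Z K) : stabilizer G hK.quotientDiff = K :=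
  (hK.eq_of_le (isComplement'_stabilizer_of_coprime hco).disjoint fun _ hk =>
    mem_stabilizer_iff.mpr <|
      congrArg Quotient.mk'' (Subtype.ext (op_smul_coe_set (K.inv_mem hk)))).symm

theorem exists_map_conj_eq_of_isComplement' (hco : (Nat.card Z).Coprime Z.index)
    {H K : Subgroup G} (hH : IsComplement' Z H) (hK : IsComplement' Z K) :
    ∃ g : G, H.map (MulAut.conj g).toMonoidHom = K := by
  obtain ⟨z, hz⟩ := exists_smul_eq hco hH.quotientDiff hK.quotientDiff
  refine ⟨z, ?_⟩
  rw [← hH.stabilizer_quotientDiff hco, ← hK.stabilizer_quotientDiff hco, ← hz,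
    ← stabilizer_smul_eq_stabilizer_map_conj]
  rfl

end QuotientDiff

variable [Finite G]

theorem exists_map_conj_eq_of_sup_eq_of_isMulCommutative {Z H K : Subgroup G} [Z.Normal]
    [IsMulCommutative Z] (hH : (Nat.card Z).Coprime (Nat.card H))
    (hK : (Nat.card Z).Coprime (Nat.card K)) (hHK : Z ⊔ H = Z ⊔ K) :
    ∃ g : G, H.map (MulAut.conj g).toMonoidHom = K := by
  have hcH := isComplement'_subgroupOf_sup (disjoint_of_coprime_natCard hH)
  have hcK := isComplement'_subgroupOf_sup (disjoint_of_coprime_natCard hK)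
  rw [← hHK] at hcK
  have hco : (Nat.card (Z.subgroupOf (Z ⊔ H))).Coprime (Z.subgroupOf (Z ⊔ H)).index := by
    rwa [hcH.symm.index_eq_card, card_subgroupOf_of_le le_sup_left,
      card_subgroupOf_of_le le_sup_right]
  obtain ⟨m, hm⟩ := exists_map_conj_eq_of_isComplement' hco hcH hcK
  exact ⟨m, map_conj_eq_of_map_conj_subgroupOf_eq le_sup_right (hHK ▸ le_sup_right) hm⟩

theorem card_map_mk'_mul_card {Z N : Subgroup G} [Z.Normal] (h : Z ≤ N) :
    Nat.card (N.map (QuotientGroup.mk' Z)) * Nat.card Z = Nat.card N := by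
  have hidx : (N.map (QuotientGroup.mk' Z)).index = N.index :=
    index_map_eq _ (QuotientGroup.mk'_surjective Z) (by rwa [QuotientGroup.ker_mk'])
  have h₁ := (N.map (QuotientGroup.mk' Z)).card_mul_index
  rw [hidx, ← index_eq_card] at h₁
  refine Nat.eq_of_mul_eq_mul_right (Nat.pos_of_ne_zero (index_ne_zero_of_finite (H := N))) ?_
  calc _ = Nat.card (N.map (QuotientGroup.mk' Z)) * N.index * Nat.card Z := by ring
    _ = Nat.card N * N.index := by rw [h₁, Z.index_mul_card, N.card_mul_index]

theorem card_map_mk'_lt_card {Z N : Subgroup G} [Z.Normal] (hZ : Z ≠ ⊥) (h : Z ≤ N) :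
    Nat.card (N.map (QuotientGroup.mk' Z)) < Nat.card N := by
  rw [← card_map_mk'_mul_card h]
  exact lt_mul_of_one_lt_right Nat.card_pos ((one_lt_card_iff_ne_bot Z).mpr hZ)

end Subgroup

open Subgroup in
theorem IsPGroup.exists_map_conj_eq_of_sup_eq {G : Type*} [Group G] [Finite G] {p : ℕ}
    [Fact p.Prime] {N H K : Subgroup G} [N.Normal] (hN : IsPGroup p N)
    (hH : (Nat.card N).Coprime (Nat.card H)) (hK : (Nat.card N).Coprime (Nat.card K))
    (hHK : N ⊔ H = N ⊔ K) : ∃ g : G, H.map (MulAut.conj g).toMonoidHom = K := by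
  induction hn : Nat.card N using Nat.strong_induction_on generalizing G with
  | _ n ih =>
  subst hn
  rcases eq_or_ne N ⊥ with rfl | hN₁
  · rw [bot_sup_eq, bot_sup_eq] at hHK
    exact ⟨1, by ext; simp [hHK]⟩
  set Z := (center N).map N.subtype
  have hZN : Z ≤ N := map_subtype_le _
  have hZ₁ : Z ≠ ⊥ := by
    have : Nontrivial N := (nontrivial_iff_ne_bot N).mpr hN₁
    rw [Ne, map_eq_bot_iff_of_injective _ N.subtype_injective]
    exact hN.bot_lt_center.ne'
  set π := QuotientGroup.mk' Z
  have : (N.map π).Normal := Normal.map ‹_› π (QuotientGroup.mk'_surjective Z)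
  obtain ⟨g, hg⟩ := ih _ (card_map_mk'_lt_card hZ₁ hZN) (hN.map π)
    ((hH.coprime_dvd_left (card_map_dvd N π)).coprime_dvd_right (card_map_dvd H π))
    ((hK.coprime_dvd_left (card_map_dvd N π)).coprime_dvd_right (card_map_dvd K π))
    (by rw [← Subgroup.map_sup, ← Subgroup.map_sup, hHK]) rfl
  obtain ⟨g, rfl⟩ := QuotientGroup.mk'_surjective Z g
  have hsup : Z ⊔ H.map (MulAut.conj g).toMonoidHom = Z ⊔ K := by
    rw [← QuotientGroup.ker_mk' Z]
    exact ker_sup_eq_of_map_eq ((map_map_conj π H g).trans hg)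
  have hZN' := card_dvd_of_le hZN
  obtain ⟨m, hm⟩ := exists_map_conj_eq_of_sup_eq_of_isMulCommutative
    (by rw [card_map_of_injective (K := H) (MulAut.conj g).injective]
        exact hH.coprime_dvd_left hZN')
    (hK.coprime_dvd_left hZN') hsup
  exact ⟨m * g, by rw [← map_conj_map_conj, hm]⟩

theorem IsPGroup.coprime_card_of_coprime {G : Type*} [Group G] [Finite G] {p n : ℕ}
    [Fact p.Prime] (hG : IsPGroup p G) (hn : n.Coprime p) : (Nat.card G).Coprime n := by
  obtain ⟨k, hk⟩ := IsPGroup.iff_card.mp hG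
  exact hk ▸ hn.symm.pow_left k

theorem SemidirectProduct.nonempty_mulEquiv_of_map_conj_range_eq {N G₁ G₂ : Type*} [Group N]
    [Group G₁] [Group G₂] {φ₁ : G₁ →* MulAut N} {φ₂ : G₂ →* MulAut N}
    (hφ₁ : Function.Injective φ₁) (hφ₂ : Function.Injective φ₂) {α : MulAut N}
    (h : φ₁.range.map (MulAut.conj α).toMonoidHom = φ₂.range) :
    Nonempty (N ⋊[φ₁] G₁ ≃* N ⋊[φ₂] G₂) := by
  let ψ := (MulAut.conj α).toMonoidHom.comp φ₁
  have hψ : Function.Injective ψ := (MulAut.conj α).injective.comp hφ₁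
  have hrange : ψ.range = φ₂.range := by rw [MonoidHom.range_comp, h]
  let f : G₁ ≃* G₂ := (MonoidHom.ofInjective hψ).trans
    ((MulEquiv.subgroupCongr hrange).trans (MonoidHom.ofInjective hφ₂).symm)
  have hf (g : G₁) : φ₂ (f g) = α * φ₁ g * α⁻¹ := MonoidHom.apply_ofInjective_symm hφ₂ _
  refine ⟨SemidirectProduct.congr α f fun g => ?_⟩
  ext n
  simp [hf]

theorem ker_toOut (P : Type) [Group P] : (toOut P).ker = Inn P :=
  QuotientGroup.ker_mk' _

theorem semidirectProduct_iso_of_conj_image_general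
    (p : ℕ) (hp : p.Prime) (P : Type) [Group P] [Fintype P] (hP : IsPGroup p P)
    (C₁ C₂ : Type) [Group C₁] [Group C₂]
    (hc₁ : Nat.Coprime (Nat.card C₁) p) (hc₂ : Nat.Coprime (Nat.card C₂) p)
    (φ₁ : C₁ →* MulAut P) (φ₂ : C₂ →* MulAut P)
    (hφ₁ : Function.Injective ((toOut P).comp φ₁))
    (hφ₂ : Function.Injective ((toOut P).comp φ₂))
    (hconj : ∃ g : Out P,
      (fun x => g⁻¹ * x * g) '' (((toOut P).comp φ₁).range : Set (Out P)) =
        (((toOut P).comp φ₂).range : Set (Out P))) :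
    Nonempty ((P ⋊[φ₁] C₁) ≃* (P ⋊[φ₂] C₂)) := by
  have : Fact p.Prime := ⟨hp⟩
  obtain ⟨g, hg⟩ := hconj
  obtain ⟨β, rfl⟩ : ∃ β, toOut P β = g := QuotientGroup.mk'_surjective (Inn P) g
  have hinj₁ : Function.Injective φ₁ := hφ₁.of_comp (f := toOut P)
  have hinj₂ : Function.Injective φ₂ := hφ₂.of_comp (f := toOut P)
  have hInn : IsPGroup p (Inn P) := hP.of_surjective _ MulAut.conj.rangeRestrict_surjective
  set H := φ₁.range.map (MulAut.conj β⁻¹).toMonoidHom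
  have hOut : H.map (toOut P) = φ₂.range.map (toOut P) := by
    rw [Subgroup.map_map_conj, ← MonoidHom.range_comp (toOut P) φ₁,
      ← MonoidHom.range_comp (toOut P) φ₂]
    refine SetLike.coe_injective ?_
    rw [Subgroup.coe_map, ← hg]
    ext
    simp
  have hsup : Inn P ⊔ H = Inn P ⊔ φ₂.range := ker_toOut P ▸ Subgroup.ker_sup_eq_of_map_eq hOut
  obtain ⟨a, ha⟩ := hInn.exists_map_conj_eq_of_sup_eq
    (hInn.coprime_card_of_coprime (by
      rwa [Subgroup.card_map_of_injective (MulAut.conj β⁻¹).injective,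
        ← Nat.card_congr (MonoidHom.ofInjective hinj₁).toEquiv]))
    (hInn.coprime_card_of_coprime (by
      rwa [← Nat.card_congr (MonoidHom.ofInjective hinj₂).toEquiv]))
    hsup
  exact SemidirectProduct.nonempty_mulEquiv_of_map_conj_range_eq (α := a * β⁻¹) hinj₁ hinj₂
    (by rw [← Subgroup.map_conj_map_conj, ha])

/-- **Theorem 0.5 (algebraic form).**  Let `P` be a finite `p`-group and `C₁, C₂` finite cyclic
groups of order prime to `p`, acting on `P` via `φᵢ : Cᵢ → Aut(P)` in such a way that the
composites `Cᵢ → Aut(P) → Out(P)` are injective.  If the images of `C₁` and `C₂` in `Out(P)`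
are conjugate subgroups, then `P ⋊[φ₁] C₁ ≅ P ⋊[φ₂] C₂`. -/
theorem semidirectProduct_iso_of_conj_image
    (p : ℕ) (hp : p.Prime) (P : Type) [Group P] [Fintype P] (hP : IsPGroup p P)
    (C₁ C₂ : Type) [Group C₁] [Fintype C₁] [Group C₂] [Fintype C₂]
    (hC₁ : IsCyclic C₁) (hC₂ : IsCyclic C₂)
    (hc₁ : Nat.Coprime (Nat.card C₁) p) (hc₂ : Nat.Coprime (Nat.card C₂) p)
    (φ₁ : C₁ →* MulAut P) (φ₂ : C₂ →* MulAut P)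
    (hφ₁ : Function.Injective ((toOut P).comp φ₁))
    (hφ₂ : Function.Injective ((toOut P).comp φ₂))
    (hconj : ∃ g : Out P,
      (fun x => g⁻¹ * x * g) '' (((toOut P).comp φ₁).range : Set (Out P)) =
        (((toOut P).comp φ₂).range : Set (Out P))) :
    Nonempty ((P ⋊[φ₁] C₁) ≃* (P ⋊[φ₂] C₂)) :=
  semidirectProduct_iso_of_conj_image_general p hp P hP C₁ C₂ hc₁ hc₂ φ₁ φ₂ hφ₁ hφ₂ hconj
end

section
/- Let p be a prime, G a finite group, and Q a subgroup of G. Conjugation induces a well-defined map θ : N_G(Q)/Q → Out(Q). Then in the group algebra F_p[Out(Q)] (with F_p = ZMod p), the element W̄ = Σ_{w ∈ N_G(Q)/Q} θ(w) is nonzero if and only if p does not divide |C_G(Q)| / |Z(Q)|, i.e., if and only if C_G(Q)/Z(Q) is a p'-group. -/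
/-- Conjugation induces a well-defined map `θ : N_G(Q)/Q → Out Q`. -/
def theta (G : Type) [Group G] (Q : Subgroup G) :
    (Subgroup.normalizer (Q : Set G) ⧸ Q.subgroupOf (Subgroup.normalizer (Q : Set G))) → Out Q := fun x =>
  Quotient.liftOn' x (fun n => toOut Q (Q.normalizerMonoidHom n))
    (by
      rintro n n' h
      rw [QuotientGroup.leftRel_apply] at h
      apply QuotientGroup.eq.mpr
      refine ⟨(⟨(n : G)⁻¹ * n', h⟩ : Q), ?_⟩
      rw [← map_inv Q.normalizerMonoidHom, ← map_mul Q.normalizerMonoidHom]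
      ext x
      rfl)


/-! Since θ is a homomorphism, every coefficient of `W̄` is either `0` or the order of `ker θ`,
so `W̄ ≠ 0` iff `p ∤ |ker θ|`. An element `n ∈ N_G(Q)` acts on `Q` as the inner automorphism
of `q ∈ Q` iff `q⁻¹ n` centralizes `Q`; hence `ker θ = Q C_G(Q) / Q ≅ C_G(Q) / Z(Q)`. -/

open Finset Subgroup

namespace MonoidAlgebra

theorem coeff_sum_single_one {ι R K : Type*} [Semiring R] [Fintype ι] [DecidableEq K]
    (f : ι → K) (g : K) :
    (∑ i, single (f i) (1 : R)).coeff g = #{i | f i = g} := by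
  simp [coeff_sum, Finsupp.finsetSum_apply, coeff_single, Finsupp.single_apply]

theorem finsum_single_one_eq_zero_iff {R H K : Type*} [Semiring R] [Group H] [Finite H]
    [Monoid K] (f : H →* K) :
    (∑ᶠ h, single (f h) (1 : R)) = 0 ↔ (Nat.card f.ker : R) = 0 := by
  classical
  have := Fintype.ofFinite H
  have card_ker : Nat.card f.ker = #{h | f h = 1} := by
    rw [← Fintype.card_subtype, ← Nat.card_eq_fintype_card]
    rfl
  rw [finsum_eq_sum_of_fintype, ← coeff_inj, coeff_zero, DFunLike.ext_iff]
  simp only [coeff_sum_single_one, Finsupp.coe_zero, Pi.zero_apply, card_ker]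
  refine ⟨fun h ↦ h 1, fun h g ↦ ?_⟩
  by_cases hg : g ∈ Set.range f
  · rwa [MonoidHom.card_fiber_eq_of_mem_range f hg ⟨1, map_one f⟩]
  · rw [filter_false_of_mem fun x _ hx ↦ hg ⟨x, hx⟩, card_empty, Nat.cast_zero]

end MonoidAlgebra

theorem Subgroup.card_inf_mul_relIndex {G : Type*} [Group G] (H K : Subgroup G) :
    Nat.card (H ⊓ K : Subgroup G) * H.relIndex K = Nat.card K := by
  rw [← relIndex_bot_left, ← relIndex_bot_left K, ← inf_relIndex_right H K]
  exact relIndex_mul_relIndex _ _ _ bot_le inf_le_right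

section Weyl

variable {G : Type} [Group G] (Q : Subgroup G)

theorem Subgroup.normalizerMonoidHom_eq_conj (n : normalizer (Q : Set G)) (hn : (n : G) ∈ Q) :
    Q.normalizerMonoidHom n = MulAut.conj (⟨n, hn⟩ : Q) := by
  ext
  rfl

def thetaHom :
    normalizer (Q : Set G) ⧸ Q.subgroupOf (normalizer (Q : Set G)) →* Out Q :=
  QuotientGroup.lift _ ((toOut Q).comp Q.normalizerMonoidHom) fun n hn ↦
    (QuotientGroup.eq_one_iff _).mpr ⟨_, (normalizerMonoidHom_eq_conj Q n hn).symm⟩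

theorem theta_eq_thetaHom : theta G Q = thetaHom Q := by
  funext w
  induction w using QuotientGroup.induction_on
  rfl

theorem ker_thetaHom : (thetaHom Q).ker =
    ((centralizer (Q : Set G)).subgroupOf (normalizer (Q : Set G))).map (QuotientGroup.mk' _) := by
  ext w
  induction w using QuotientGroup.induction_on with | H n => ?_
  rw [MonoidHom.mem_ker, Subgroup.mem_map, ← normalizerMonoidHom_ker]
  constructor
  · intro h
    obtain ⟨q, hq⟩ : Q.normalizerMonoidHom n ∈ Inn Q := (QuotientGroup.eq_one_iff _).mp h
    let q' : normalizer (Q : Set G) := ⟨q, Q.le_normalizer q.2⟩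
    refine ⟨q'⁻¹ * n, ?_, ?_⟩
    · rw [MonoidHom.mem_ker, map_mul, map_inv, normalizerMonoidHom_eq_conj Q q' q.2, hq,
        inv_mul_cancel]
    · have hq' : QuotientGroup.mk' (Q.subgroupOf _) q' = 1 :=
        (QuotientGroup.eq_one_iff q').mpr q.2
      rw [map_mul, map_inv, hq', inv_one, one_mul]
      rfl
  · rintro ⟨c, hc, hcn⟩
    rw [← hcn]
    show toOut Q (Q.normalizerMonoidHom c) = 1
    rw [MonoidHom.mem_ker.mp hc, map_one]

theorem card_ker_thetaHom :
    Nat.card (thetaHom Q).ker = Q.relIndex (centralizer (Q : Set G)) := by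
  rw [ker_thetaHom, ← relIndex_ker, QuotientGroup.ker_mk', subgroupOf, relIndex_comap,
    map_subgroupOf_eq_of_le (centralizer_le_normalizer _)]

end Weyl

theorem weyl_sum_ne_zero_iff_general (p : ℕ)
    (G : Type) [Group G] [Fintype G] (Q : Subgroup G) :
    (∑ᶠ w : Subgroup.normalizer (Q : Set G) ⧸ Q.subgroupOf (Subgroup.normalizer (Q : Set G)),
        (MonoidAlgebra.single (theta G Q w) (1 : ZMod p) : MonoidAlgebra (ZMod p) (Out Q))) ≠ 0 ↔
      ¬ p ∣ Nat.card (Subgroup.centralizer (Q : Set G)) /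
          Nat.card (Q ⊓ Subgroup.centralizer (Q : Set G) : Subgroup G) := by
  rw [theta_eq_thetaHom, Ne, MonoidAlgebra.finsum_single_one_eq_zero_iff, card_ker_thetaHom,
    ZMod.natCast_eq_zero_iff, ← card_inf_mul_relIndex, Nat.mul_div_cancel_left _ Nat.card_pos]

/-- **Section 1 criterion for `K(Q,G)`.**  For a subgroup `Q` of a finite group `G`, the sum
`W̄ = Σ_{w ∈ N_G(Q)/Q} θ(w)` in the group algebra `F_p[Out Q]` is nonzero if and only if
`p` does not divide `|C_G(Q)|/|Z(Q)|`, i.e. iff `C_G(Q)/Z(Q)` is a `p'`-group. -/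
theorem weyl_sum_ne_zero_iff (p : ℕ) (hp : p.Prime)
    (G : Type) [Group G] [Fintype G] (Q : Subgroup G) :
    (∑ᶠ w : Subgroup.normalizer (Q : Set G) ⧸ Q.subgroupOf (Subgroup.normalizer (Q : Set G)),
        (MonoidAlgebra.single (theta G Q w) (1 : ZMod p) : MonoidAlgebra (ZMod p) (Out Q))) ≠ 0 ↔
      ¬ p ∣ Nat.card (Subgroup.centralizer (Q : Set G)) /
          Nat.card (Q ⊓ Subgroup.centralizer (Q : Set G) : Subgroup G) :=
  weyl_sum_ne_zero_iff_general p G Q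
end

section
/- Let p be a prime and G a finite group. For each subgroup H ≤ G of order prime to p, let χ_H be the ℚ-valued function on the set of p-regular elements of G (elements whose order is prime to p) defined by χ_H(g) = the number of cosets in G/H fixed by left multiplication by g. Then the dimension over ℚ of the linear span of the functions {χ_H : H ≤ G, |H| prime to p} equals the number of conjugacy classes of cyclic subgroups of G of order prime to p. -/
/-- The set of `p`-regular elements of `G`: elements whose order is prime to `p`. -/
def PRegular (p : ℕ) (G : Type*) [Group G] : Type _ :=
  {g : G // Nat.Coprime (orderOf g) p}

/-- The Brauer character of the permutation module `F_p[G/H]`: the `ℚ`-valued function on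
`p`-regular elements sending `g` to the number of cosets in `G/H` fixed by left
multiplication by `g`. -/
noncomputable def permChar (p : ℕ) (G : Type*) [Group G] (H : Subgroup G) :
    PRegular p G → ℚ := fun g =>
  (Nat.card {x : G ⧸ H // g.1 • x = x} : ℚ)

/-!
The number of cosets of `H` fixed by `g` equals the number of points of `G ⧸ H` fixed by the
cyclic subgroup `⟨g⟩`, and it only depends on the conjugacy class of `⟨g⟩`. So every `χ_H` is
the pull-back, along the surjection `g ↦ [⟨g⟩]` from `p`-regular elements onto the conjugacy
classes of cyclic `p'`-subgroups, of the function `[K] ↦ |(G ⧸ H)^K|`; pulling back is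
injective, so the rank is at most the number of classes. Conversely the functions attached to
the cyclic `p'`-subgroups `H` themselves form a triangular "table of marks": `(G ⧸ H)^K` is
nonempty only if `K` is subconjugate to `H`, hence `|K| ≤ |H|` with equality only when `K` and
`H` are conjugate, while `(G ⧸ H)^H` contains the trivial coset. These functions are therefore
linearly independent.
-/

open MulAction
open scoped Pointwise

theorem linearIndependent_of_triangular {ι R β : Type*} [Fintype ι] [Ring R]
    [NoZeroDivisors R] [LinearOrder β] (v : ι → ι → R) (r : ι → β) (hdiag : ∀ i, v i i ≠ 0)
    (htri : ∀ i j, v j i ≠ 0 → r j ≤ r i → j = i) : LinearIndependent R v := by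
  classical
  rw [Fintype.linearIndependent_iff]
  intro a ha
  by_contra! h
  obtain ⟨i, hi, hmax⟩ := (Finset.univ.filter (a · ≠ 0)).exists_max_image r
    (h.imp fun i hi => by simpa using hi)
  have hai : a i ≠ 0 := by simpa using hi
  have hsum : ∑ j, a j * v j i = 0 := by simpa using congrFun ha i
  rw [Finset.sum_eq_single i (fun j _ hji => ?_) (by simp)] at hsum
  · exact mul_ne_zero hai (hdiag i) hsum
  · by_contra hj
    obtain ⟨haj, hvj⟩ := mul_ne_zero_iff.mp hj
    exact hji (htri i j hvj (hmax j (by simpa using haj)))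

theorem finrank_span_eq_card_of_linearIndependent {ι K : Type*} [Fintype ι] [DivisionRing K]
    {T : Set (ι → K)} {v : ι → ι → K} (hv : LinearIndependent K v) (hvT : Set.range v ⊆ T) :
    Module.finrank K (Submodule.span K T) = Fintype.card ι :=
  le_antisymm ((Submodule.finrank_le _).trans (Module.finrank_fintype_fun_eq_card K).le)
    ((finrank_span_eq_card hv).symm.le.trans (Submodule.finrank_mono (Submodule.span_mono hvT)))

theorem finrank_span_image_comp_of_surjective {α β R : Type*} [Ring R] {f : α → β}
    (hf : Function.Surjective f) (T : Set (β → R)) :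
    Module.finrank R (Submodule.span R ((· ∘ f) '' T)) =
      Module.finrank R (Submodule.span R T) := by
  change Module.finrank R (Submodule.span R (LinearMap.funLeft R R f '' T)) = _
  rw [Submodule.span_image]
  exact (Submodule.equivMapOfInjective _
    (LinearMap.funLeft_injective_of_surjective R R f hf) _).finrank_eq.symm

namespace MulAction

variable {G α : Type*} [Group G] [MulAction G α]

theorem mem_fixedPoints_subgroup_iff {K : Subgroup G} {a : α} :
    a ∈ fixedPoints K α ↔ K ≤ stabilizer G a := by
  simp [mem_fixedPoints, SetLike.le_def]

theorem fixedPoints_zpowers (g : G) : fixedPoints (Subgroup.zpowers g) α = fixedBy α g := by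
  ext a
  rw [mem_fixedPoints_subgroup_iff, Subgroup.zpowers_le, mem_stabilizer_iff, mem_fixedBy]

theorem fixedPoints_map_conj (K : Subgroup G) (g : G) :
    fixedPoints (K.map (MulAut.conj g).toMonoidHom) α = g • fixedPoints K α := by
  ext a
  rw [Set.mem_smul_set_iff_inv_smul_mem, mem_fixedPoints_subgroup_iff,
    mem_fixedPoints_subgroup_iff]
  conv_rhs => rw [← Subgroup.map_le_map_iff_of_injective (f := (MulAut.conj g).toMonoidHom)
      (MulAut.conj g).injective,
    ← stabilizer_smul_eq_stabilizer_map_conj, smul_inv_smul]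

theorem ncard_fixedPoints_map_conj (K : Subgroup G) (g : G) :
    (fixedPoints (K.map (MulAut.conj g).toMonoidHom) α).ncard = (fixedPoints K α).ncard := by
  rw [fixedPoints_map_conj, Set.ncard_smul_set]

end MulAction

theorem QuotientGroup.exists_le_map_conj_of_mem_fixedPoints {G : Type*} [Group G]
    {S K : Subgroup G} {x : G ⧸ S} (hx : x ∈ fixedPoints K (G ⧸ S)) :
    ∃ g : G, K ≤ S.map (MulAut.conj g).toMonoidHom := by
  obtain ⟨g, rfl⟩ := QuotientGroup.mk_surjective x
  refine ⟨g, ?_⟩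
  have hg : ((g : G) : G ⧸ S) = g • ((1 : G) : G ⧸ S) := by simp
  have hx := mem_fixedPoints_subgroup_iff.mp hx
  rwa [hg, stabilizer_smul_eq_stabilizer_map_conj, stabilizer_quotient] at hx

theorem QuotientGroup.one_mem_fixedPoints_self {G : Type*} [Group G] (S : Subgroup G) :
    ((1 : G) : G ⧸ S) ∈ fixedPoints S (G ⧸ S) :=
  mem_fixedPoints_subgroup_iff.mpr (stabilizer_quotient S).ge

namespace HarrisKuhn

variable (p : ℕ) (G : Type*) [Group G]

abbrev CyclicPSubgroup : Type _ :=
  {H : Subgroup G // IsCyclic H ∧ Nat.Coprime (Nat.card H) p}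

variable {p G} in
def IsConj (H K : CyclicPSubgroup p G) : Prop :=
  ∃ g : G, (fun x => g⁻¹ * x * g) '' ((H : Subgroup G) : Set G) = ((K : Subgroup G) : Set G)

abbrev CyclicPSubgroupClass : Type _ := Quot (IsConj (p := p) (G := G))

variable {p G}

theorem isConj_iff {H K : CyclicPSubgroup p G} :
    IsConj H K ↔ ∃ g : G, H.1.map (MulAut.conj g).toMonoidHom = K.1 := by
  have himage : ∀ g : G, (fun x => g⁻¹ * x * g) '' (H.1 : Set G) =
      H.1.map (MulAut.conj g⁻¹).toMonoidHom := fun g => by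
    ext x; simp
  simp only [IsConj, himage, SetLike.coe_set_eq]
  exact ⟨fun ⟨g, h⟩ => ⟨g⁻¹, h⟩, fun ⟨g, h⟩ => ⟨g⁻¹, by rwa [inv_inv]⟩⟩

variable (p G)

def zpowersClass (g : PRegular p G) : CyclicPSubgroupClass p G :=
  Quot.mk _ ⟨Subgroup.zpowers g.1, inferInstance, by rw [Nat.card_zpowers]; exact g.2⟩

theorem zpowersClass_surjective : Function.Surjective (zpowersClass p G) := by
  rintro ⟨K, hcyc, hcop⟩
  obtain ⟨g, rfl⟩ := (Subgroup.isCyclic_iff_exists_zpowers_eq_top K).mp hcyc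
  exact ⟨⟨g, by rwa [← Nat.card_zpowers]⟩, rfl⟩

noncomputable def fixedCount (S : Subgroup G) : CyclicPSubgroupClass p G → ℚ :=
  Quot.lift (fun K => ((fixedPoints K.1 (G ⧸ S)).ncard : ℚ)) fun H K h => by
    obtain ⟨g, hg⟩ := isConj_iff.mp h
    rw [← hg]
    exact congrArg Nat.cast (ncard_fixedPoints_map_conj H.1 g).symm

theorem permChar_eq_fixedCount_comp (S : Subgroup G) :
    permChar p G S = fixedCount p G S ∘ zpowersClass p G := by
  ext g
  exact congrArg (fun s : Set (G ⧸ S) => (Nat.card s : ℚ)) (fixedPoints_zpowers g.1).symm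

variable {p G}

theorem fixedCount_apply (S : Subgroup G) (c : CyclicPSubgroupClass p G) :
    fixedCount p G S c = (fixedPoints c.out.1 (G ⧸ S)).ncard := by
  conv_lhs => rw [← Quot.out_eq c]
  rfl

theorem fixedCount_out_self_ne_zero [Finite G] (c : CyclicPSubgroupClass p G) :
    fixedCount p G c.out.1 c ≠ 0 := by
  rw [fixedCount_apply, Nat.cast_ne_zero]
  exact Set.ncard_ne_zero_of_mem (QuotientGroup.one_mem_fixedPoints_self _)

theorem eq_of_fixedCount_out_ne_zero [Finite G] {c d : CyclicPSubgroupClass p G}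
    (h : fixedCount p G d.out.1 c ≠ 0) (hcard : Nat.card d.out.1 ≤ Nat.card c.out.1) :
    d = c := by
  rw [fixedCount_apply, Nat.cast_ne_zero] at h
  obtain ⟨x, hx⟩ := Set.nonempty_of_ncard_ne_zero h
  obtain ⟨g, hle⟩ := QuotientGroup.exists_le_map_conj_of_mem_fixedPoints hx
  have hconj : c.out.1 = d.out.1.map (MulAut.conj g).toMonoidHom :=
    Subgroup.eq_of_le_of_card_ge hle
      (by rwa [Subgroup.card_map_of_injective (MulAut.conj g).injective])
  rw [← Quot.out_eq c, ← Quot.out_eq d]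
  exact Quot.sound (isConj_iff.mpr ⟨g, hconj.symm⟩)

theorem linearIndependent_fixedCount_out [Finite G] [Fintype (CyclicPSubgroupClass p G)] :
    LinearIndependent ℚ fun d : CyclicPSubgroupClass p G => fixedCount p G d.out.1 :=
  linearIndependent_of_triangular _ (fun c => Nat.card c.out.1) fixedCount_out_self_ne_zero
    fun _ _ h hcard => eq_of_fixedCount_out_ne_zero h hcard

end HarrisKuhn

open HarrisKuhn in
theorem rank_span_permChar_general (p : ℕ) (G : Type) [Group G] [Fintype G] :
    Module.finrank ℚ
        (Submodule.span ℚ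
          {f : PRegular p G → ℚ | ∃ H : Subgroup G, Nat.Coprime (Nat.card H) p ∧
            f = permChar p G H}) =
      Nat.card
        (Quot (fun (H K : {H : Subgroup G // IsCyclic H ∧ Nat.Coprime (Nat.card H) p}) =>
          ∃ g : G, (fun x => g⁻¹ * x * g) '' ((H : Subgroup G) : Set G) =
            ((K : Subgroup G) : Set G))) := by
  change _ = Nat.card (CyclicPSubgroupClass p G)
  have : Fintype (CyclicPSubgroupClass p G) := Fintype.ofFinite _
  have hchars : {f : PRegular p G → ℚ | ∃ H : Subgroup G, Nat.Coprime (Nat.card H) p ∧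
      f = permChar p G H} = (· ∘ zpowersClass p G) ''
        {f | ∃ H : Subgroup G, Nat.Coprime (Nat.card H) p ∧ f = fixedCount p G H} := by
    ext f
    simp only [Set.mem_image, permChar_eq_fixedCount_comp]
    aesop
  rw [hchars, finrank_span_image_comp_of_surjective (zpowersClass_surjective p G),
    Nat.card_eq_fintype_card]
  exact finrank_span_eq_card_of_linearIndependent linearIndependent_fixedCount_out
    (by rintro _ ⟨c, rfl⟩; exact ⟨_, c.out.2.2, rfl⟩)

/-- **Proposition 3.2 (Harris–Kuhn), reformulated.**  For a finite group `G` and a prime `p`,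
the dimension of the `ℚ`-span of the Brauer characters of the permutation modules `F_p[G/H]`,
as `H` runs over the `p'`-subgroups of `G`, equals the number of conjugacy classes of cyclic
`p'`-subgroups of `G`. -/
theorem rank_span_permChar (p : ℕ) (hp : p.Prime) (G : Type) [Group G] [Fintype G] :
    Module.finrank ℚ
        (Submodule.span ℚ
          {f : PRegular p G → ℚ | ∃ H : Subgroup G, Nat.Coprime (Nat.card H) p ∧
            f = permChar p G H}) =
      Nat.card
        (Quot (fun (H K : {H : Subgroup G // IsCyclic H ∧ Nat.Coprime (Nat.card H) p}) =>
          ∃ g : G, (fun x => g⁻¹ * x * g) '' ((H : Subgroup G) : Set G) =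
            ((K : Subgroup G) : Set G))) :=
  rank_span_permChar_general p G
end
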